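/- For the index-selection iteration of Theorem 3 applied repeatedly (each step choosing the m largest-magnitude residual components), the sequence of errors satisfies ‖x*-x_{k+1}‖_A² ≤ (1 - m λ_min(A)/(n λ_max(A))) ‖x*-x_k‖_A², hence the method converges to x* linearly. -/

import Mathlib

/-!
Write `e = x* - x_k`, so that `r_k = A e`. The update is the `A`-orthogonal (Galerkin) projection
of `e` onto the selected coordinates, so the energy `eᵀ A e` drops by exactly
`d = wᵀ (Eᵀ A E)⁻¹ w` with `w = Eᵀ r_k`. As `Eᵀ A E ≤ λ_max`, `d ≥ ‖w‖² / λ_max`; the greedy choice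
keeps at least the fraction `m / n` of `‖r_k‖²`; and `‖r_k‖² ≥ λ_min eᵀ A e`. Chaining the three
bounds gives the contraction factor, and since `A ≥ λ_min` a geometrically decaying energy forces
`e → 0`.
-/

open Matrix Filter Topology Finset
open scoped MatrixOrder

theorem Finset.card_nsmul_sum_le_card_nsmul_sum_of_forall_le {ι M : Type*} [Fintype ι]
    [AddCommMonoid M] [PartialOrder M] [IsOrderedAddMonoid M] (s : Finset ι) (g : ι → M)
    (h : ∀ i ∉ s, ∀ j ∈ s, g i ≤ g j) :
    #s • ∑ i, g i ≤ Fintype.card ι • ∑ i ∈ s, g i := by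
  classical
  have hcompl : #s • ∑ i ∈ sᶜ, g i ≤ #sᶜ • ∑ i ∈ s, g i := by
    rw [smul_sum, ← sum_const]
    refine sum_le_sum fun i hi => ?_
    rw [← sum_const]
    exact sum_le_sum fun j hj => h i (mem_compl.mp hi) j hj
  calc #s • ∑ i, g i = #s • ∑ i ∈ s, g i + #s • ∑ i ∈ sᶜ, g i := by
        rw [← sum_add_sum_compl s g, smul_add]
    _ ≤ #s • ∑ i ∈ s, g i + #sᶜ • ∑ i ∈ s, g i := by gcongr
    _ = Fintype.card ι • ∑ i ∈ s, g i := by rw [← add_smul, card_add_card_compl]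

lemma norm_le_sqrt_dotProduct_self {ι : Type*} [Fintype ι] (v : ι → ℝ) : ‖v‖ ≤ √(v ⬝ᵥ v) :=
  (pi_norm_le_iff_of_nonneg (Real.sqrt_nonneg _)).mpr fun i => by
    rw [Real.norm_eq_abs]
    refine Real.abs_le_sqrt ?_
    simpa only [dotProduct, sq] using
      single_le_sum (f := fun j => v j * v j) (fun j _ => mul_self_nonneg _) (mem_univ i)

namespace Matrix

variable {ι κ : Type*}

lemma of_ite_eq_one_submatrix [DecidableEq ι] (f : κ → ι) :
    (of fun i j => if i = f j then (1 : ℝ) else 0) = (1 : Matrix ι ι ℝ).submatrix id f := by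
  ext i j
  simp [one_apply]

lemma one_submatrix_transpose_mulVec [Fintype ι] [DecidableEq ι] (f : κ → ι) (v : ι → ℝ) :
    ((1 : Matrix ι ι ℝ).submatrix id f)ᵀ *ᵥ v = v ∘ f := by
  ext j
  simp [mulVec, dotProduct, one_apply]

lemma one_submatrix_transpose_mul_mul [Fintype ι] [DecidableEq ι] (f : κ → ι)
    (A : Matrix ι ι ℝ) :
    ((1 : Matrix ι ι ℝ).submatrix id f)ᵀ * A * (1 : Matrix ι ι ℝ).submatrix id f
      = A.submatrix f f := by
  ext j j'
  simp [mul_apply, one_apply]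

lemma transpose_mulVec_dotProduct [Fintype ι] [Fintype κ] (E : Matrix ι κ ℝ) (u : ι → ℝ)
    (v : κ → ℝ) : Eᵀ *ᵥ u ⬝ᵥ v = u ⬝ᵥ E *ᵥ v := by
  rw [dotProduct_mulVec, mulVec_transpose]

lemma IsHermitian.dotProduct_mulVec_comm [Fintype ι] {A : Matrix ι ι ℝ} (hA : A.IsHermitian)
    (u v : ι → ℝ) : u ⬝ᵥ A *ᵥ v = v ⬝ᵥ A *ᵥ u := by
  rw [dotProduct_mulVec, ← mulVec_transpose, ← conjTranspose_eq_transpose_of_trivial, hA.eq,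
    dotProduct_comm]

lemma IsHermitian.le_smul_one_of_eigenvalues_le [Fintype ι] [DecidableEq ι] {A : Matrix ι ι ℝ}
    (hA : A.IsHermitian) {c : ℝ} (h : ∀ i, hA.eigenvalues i ≤ c) : A ≤ c • 1 := by
  rw [← Algebra.algebraMap_eq_smul_one]
  refine le_algebraMap_of_spectrum_le ?_ hA
  rw [hA.spectrum_real_eq_range_eigenvalues]
  rintro _ ⟨i, rfl⟩
  exact h i

lemma IsHermitian.smul_one_le_of_le_eigenvalues [Fintype ι] [DecidableEq ι] {A : Matrix ι ι ℝ}
    (hA : A.IsHermitian) {c : ℝ} (h : ∀ i, c ≤ hA.eigenvalues i) : c • 1 ≤ A := by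
  rw [← Algebra.algebraMap_eq_smul_one]
  refine algebraMap_le_of_le_spectrum ?_ hA
  rw [hA.spectrum_real_eq_range_eigenvalues]
  rintro _ ⟨i, rfl⟩
  exact h i

lemma dotProduct_mulVec_le_of_le_smul_one [Fintype ι] [DecidableEq ι] {A : Matrix ι ι ℝ}
    {c : ℝ} (h : A ≤ c • 1) (v : ι → ℝ) : v ⬝ᵥ A *ᵥ v ≤ c * (v ⬝ᵥ v) := by
  have := (le_iff.mp h).dotProduct_mulVec_nonneg v
  simpa [sub_mulVec, smul_mulVec, dotProduct_sub] using this

lemma mul_dotProduct_self_le_of_smul_one_le [Fintype ι] [DecidableEq ι] {A : Matrix ι ι ℝ}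
    {c : ℝ} (h : c • 1 ≤ A) (v : ι → ℝ) : c * (v ⬝ᵥ v) ≤ v ⬝ᵥ A *ᵥ v := by
  have := (le_iff.mp h).dotProduct_mulVec_nonneg v
  simpa [sub_mulVec, smul_mulVec, dotProduct_sub] using this

lemma submatrix_le_smul_one [DecidableEq ι] [DecidableEq κ] {A : Matrix ι ι ℝ} {c : ℝ}
    (h : A ≤ c • 1) {f : κ → ι} (hf : Function.Injective f) : A.submatrix f f ≤ c • 1 := by
  rw [le_iff] at h ⊢
  simpa [submatrix_sub, submatrix_smul, submatrix_one _ hf] using h.submatrix f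

lemma IsHermitian.dotProduct_mulVec_sub_galerkin [Fintype ι] [Fintype κ] [DecidableEq κ]
    {A : Matrix ι ι ℝ} (hA : A.IsHermitian) (E : Matrix ι κ ℝ) (hM : IsUnit (Eᵀ * A * E).det)
    (e : ι → ℝ) :
    (e - E *ᵥ ((Eᵀ * A * E)⁻¹ *ᵥ (Eᵀ *ᵥ (A *ᵥ e)))) ⬝ᵥ
        A *ᵥ (e - E *ᵥ ((Eᵀ * A * E)⁻¹ *ᵥ (Eᵀ *ᵥ (A *ᵥ e))))
      = e ⬝ᵥ A *ᵥ e - (Eᵀ *ᵥ (A *ᵥ e)) ⬝ᵥ (Eᵀ * A * E)⁻¹ *ᵥ (Eᵀ *ᵥ (A *ᵥ e)) := by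
  set w := Eᵀ *ᵥ (A *ᵥ e) with hw
  set u := (Eᵀ * A * E)⁻¹ *ᵥ w
  have hcross : e ⬝ᵥ A *ᵥ (E *ᵥ u) = w ⬝ᵥ u := by
    rw [hw, transpose_mulVec_dotProduct, hA.dotProduct_mulVec_comm, dotProduct_comm]
  have hcorr : (E *ᵥ u) ⬝ᵥ A *ᵥ (E *ᵥ u) = w ⬝ᵥ u := calc
    (E *ᵥ u) ⬝ᵥ A *ᵥ (E *ᵥ u) = u ⬝ᵥ (Eᵀ * A * E) *ᵥ u := by
      rw [← mulVec_mulVec, ← mulVec_mulVec, dotProduct_comm u, transpose_mulVec_dotProduct,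
        dotProduct_comm]
    _ = w ⬝ᵥ u := by
      rw [mulVec_mulVec, mul_nonsing_inv _ hM, one_mulVec, dotProduct_comm]
  rw [mulVec_sub, sub_dotProduct, dotProduct_sub, dotProduct_sub,
    hA.dotProduct_mulVec_comm (E *ᵥ u) e, hcross, hcorr]
  ring

lemma PosDef.dotProduct_self_le_mul_dotProduct_inv_mulVec [Fintype κ] [DecidableEq κ]
    {M : Matrix κ κ ℝ} (hM : M.PosDef) {c : ℝ} (h : M ≤ c • 1) (w : κ → ℝ) :
    w ⬝ᵥ w ≤ c * (w ⬝ᵥ M⁻¹ *ᵥ w) := by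
  rcases eq_or_ne w 0 with rfl | hw
  · simp
  set u := M⁻¹ *ᵥ w
  have hMu : M *ᵥ u = w := by
    rw [mulVec_mulVec, mul_nonsing_inv _ hM.det_pos.ne'.isUnit, one_mulVec]
  -- Cauchy–Schwarz for the form of `M` at `w` and `u`: `(w ⬝ w)² ≤ (w ⬝ M w) (w ⬝ u)`.
  have hcs := LinearMap.BilinForm.apply_mul_apply_le_of_forall_zero_le (toBilin' M)
    (fun v => by simpa [toBilin'_apply'] using hM.posSemidef.dotProduct_mulVec_nonneg v) w u
  simp only [toBilin'_apply'] at hcs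
  rw [hMu, hM.isHermitian.dotProduct_mulVec_comm u w, hMu, dotProduct_comm u w] at hcs
  have hww : 0 < w ⬝ᵥ w := by simpa using dotProduct_self_star_pos_iff.mpr hw
  have hd : 0 ≤ w ⬝ᵥ u := by simpa using hM.inv.posSemidef.dotProduct_mulVec_nonneg w
  have hup := mul_le_mul_of_nonneg_right (dotProduct_mulVec_le_of_le_smul_one h w) hd
  nlinarith

lemma PosSemidef.mul_dotProduct_mulVec_le [Fintype ι] [DecidableEq ι] {A : Matrix ι ι ℝ}
    (hA : A.PosSemidef) {a : ℝ} (ha : a • 1 ≤ A) (e : ι → ℝ) :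
    a * (e ⬝ᵥ A *ᵥ e) ≤ (A *ᵥ e) ⬝ᵥ (A *ᵥ e) := by
  have hq : 0 ≤ e ⬝ᵥ A *ᵥ e := by simpa using hA.dotProduct_mulVec_nonneg e
  have ht : 0 ≤ (A *ᵥ e) ⬝ᵥ (A *ᵥ e) := by simpa using dotProduct_star_self_nonneg (A *ᵥ e)
  rcases le_or_gt a 0 with ha0 | ha0
  · nlinarith
  have hcs : (e ⬝ᵥ A *ᵥ e) ^ 2 ≤ (e ⬝ᵥ e) * ((A *ᵥ e) ⬝ᵥ (A *ᵥ e)) := by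
    simpa only [dotProduct, sq] using sum_mul_sq_le_sq_mul_sq univ e (A *ᵥ e)
  have hlow := mul_le_mul_of_nonneg_right (mul_dotProduct_self_le_of_smul_one_le ha e) ht
  rcases hq.eq_or_lt with hq0 | hq0
  · rw [← hq0, mul_zero]
    exact ht
  · nlinarith

lemma card_mul_dotProduct_self_le_of_forall_abs_le [Fintype ι] [Fintype κ] {f : κ → ι}
    (hf : Function.Injective f) (r : ι → ℝ) (hsel : ∀ i ∉ Set.range f, ∀ j, |r i| ≤ |r (f j)|) :
    Fintype.card κ * (r ⬝ᵥ r) ≤ Fintype.card ι * ((r ∘ f) ⬝ᵥ (r ∘ f)) := by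
  have key := card_nsmul_sum_le_card_nsmul_sum_of_forall_le (univ.map ⟨f, hf⟩)
    (fun i => r i * r i) ?_
  · simpa only [nsmul_eq_mul, card_map, card_univ, sum_map, Function.Embedding.coeFn_mk,
      dotProduct, Function.comp_apply] using key
  · intro i hi j hj
    obtain ⟨j, -, rfl⟩ := mem_map.mp hj
    have hi' : i ∉ Set.range f := fun ⟨k, hk⟩ => hi (mem_map.mpr ⟨k, mem_univ k, hk⟩)
    simpa only [Function.Embedding.coeFn_mk, abs_mul_abs_self] using
      mul_self_le_mul_self (abs_nonneg (r i)) (hsel i hi' j)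

theorem PosDef.dotProduct_mulVec_greedy_step_le [Fintype ι] [Fintype κ] [DecidableEq ι]
    [DecidableEq κ] {A : Matrix ι ι ℝ} (hA : A.PosDef) {a b : ℝ} (ha : a • 1 ≤ A)
    (hb : A ≤ b • 1) (hb0 : 0 < b) {f : κ → ι} (hf : Function.Injective f) (e : ι → ℝ)
    (hsel : ∀ i ∉ Set.range f, ∀ j, |(A *ᵥ e) i| ≤ |(A *ᵥ e) (f j)|)
    (E : Matrix ι κ ℝ) (hE : E = (1 : Matrix ι ι ℝ).submatrix id f) :
    (e - E *ᵥ ((Eᵀ * A * E)⁻¹ *ᵥ (Eᵀ *ᵥ (A *ᵥ e)))) ⬝ᵥ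
        A *ᵥ (e - E *ᵥ ((Eᵀ * A * E)⁻¹ *ᵥ (Eᵀ *ᵥ (A *ᵥ e))))
      ≤ (1 - Fintype.card κ * a / (Fintype.card ι * b)) * (e ⬝ᵥ A *ᵥ e) := by
  have hM : Eᵀ * A * E = A.submatrix f f := hE ▸ one_submatrix_transpose_mul_mul f A
  have hMpd : (A.submatrix f f).PosDef := hA.submatrix hf
  have hw : Eᵀ *ᵥ (A *ᵥ e) = (A *ᵥ e) ∘ f := hE ▸ one_submatrix_transpose_mulVec f _
  rw [hA.isHermitian.dotProduct_mulVec_sub_galerkin E (hM ▸ hMpd.det_pos.ne'.isUnit), hM, hw]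
  set d := ((A *ᵥ e) ∘ f) ⬝ᵥ (A.submatrix f f)⁻¹ *ᵥ ((A *ᵥ e) ∘ f)
  have hd : 0 ≤ d := by
    simpa using hMpd.inv.posSemidef.dotProduct_mulVec_nonneg ((A *ᵥ e) ∘ f)
  have hproj := hMpd.dotProduct_self_le_mul_dotProduct_inv_mulVec (submatrix_le_smul_one hb hf)
    ((A *ᵥ e) ∘ f)
  have hgreedy := card_mul_dotProduct_self_le_of_forall_abs_le hf (A *ᵥ e) hsel
  have hres := hA.posSemidef.mul_dotProduct_mulVec_le ha e
  suffices Fintype.card κ * a / (Fintype.card ι * b) * (e ⬝ᵥ A *ᵥ e) ≤ d by linarith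
  rcases (Nat.cast_nonneg (α := ℝ) (Fintype.card ι)).eq_or_lt with hι | hι
  · simpa [← hι] using hd
  rw [div_mul_eq_mul_div, div_le_iff₀ (by positivity)]
  nlinarith [mul_le_mul_of_nonneg_left hres (Nat.cast_nonneg (α := ℝ) (Fintype.card κ)),
    mul_le_mul_of_nonneg_left hproj hι.le]

lemma tendsto_zero_of_dotProduct_mulVec_succ_le [Fintype ι] [DecidableEq ι] {A : Matrix ι ι ℝ}
    {a c : ℝ} (ha : a • 1 ≤ A) (ha0 : 0 < a) (hc0 : 0 ≤ c) (hc1 : c < 1) {e : ℕ → ι → ℝ}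
    (h : ∀ k, e (k + 1) ⬝ᵥ A *ᵥ e (k + 1) ≤ c * (e k ⬝ᵥ A *ᵥ e k)) :
    Tendsto e atTop (𝓝 0) := by
  have hbound (k : ℕ) : ‖e k‖ ≤ √(c ^ k * (e 0 ⬝ᵥ A *ᵥ e 0) / a) := by
    refine (norm_le_sqrt_dotProduct_self _).trans (Real.sqrt_le_sqrt ?_)
    rw [le_div_iff₀ ha0, mul_comm]
    exact (mul_dotProduct_self_le_of_smul_one_le ha _).trans
      (le_geom (u := fun k => e k ⬝ᵥ A *ᵥ e k) hc0 k fun j _ => h j)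
  refine squeeze_zero_norm hbound ?_
  simpa using (((tendsto_pow_atTop_nhds_zero_of_lt_one hc0 hc1).mul_const
    (e 0 ⬝ᵥ A *ᵥ e 0)).div_const a).sqrt

end Matrix

theorem stmt_17_general {n m : ℕ} (hm : 0 < m)
    (A : Matrix (Fin n) (Fin n) ℝ) (hA : A.PosDef)
    (lmin lmax : ℝ)
    (hmin : IsLeast (Set.range hA.1.eigenvalues) lmin)
    (hmax : IsGreatest (Set.range hA.1.eigenvalues) lmax)
    (b xstar : Fin n → ℝ) (hxstar : A.mulVec xstar = b)
    (x : ℕ → Fin n → ℝ) (r : ℕ → Fin n → ℝ)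
    (hr : ∀ k, r k = b - A.mulVec (x k))
    (f : ℕ → Fin m → Fin n) (hf : ∀ k, Function.Injective (f k))
    (hsel : ∀ k, ∀ i : Fin n, i ∉ Set.range (f k) → ∀ j : Fin m,
      |r k i| ≤ |r k (f k j)|)
    (E : ℕ → Matrix (Fin n) (Fin m) ℝ)
    (hE : ∀ k, E k = Matrix.of fun i j => if i = f k j then 1 else 0)
    (hstep : ∀ k, x (k+1) = x k +
      (E k).mulVec (((E k)ᵀ * A * E k)⁻¹.mulVec ((E k)ᵀ.mulVec (r k)))) :
    (∀ k, (xstar - x (k+1)) ⬝ᵥ A.mulVec (xstar - x (k+1))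
        ≤ (1 - m * lmin / (n * lmax)) *
          ((xstar - x k) ⬝ᵥ A.mulVec (xstar - x k))) ∧
      Filter.Tendsto x Filter.atTop (nhds xstar) := by
  obtain ⟨i₀, hi₀⟩ := hmin.1
  have hlmin : 0 < lmin := hi₀ ▸ hA.eigenvalues_pos i₀
  have hle : lmin ≤ lmax := hi₀ ▸ hmax.2 ⟨i₀, rfl⟩
  have hlmax : 0 < lmax := hlmin.trans_le hle
  have hmn : (m : ℝ) ≤ n := by
    exact_mod_cast (by simpa using Fintype.card_le_of_injective _ (hf 0) : m ≤ n)
  have hn : (0 : ℝ) < n := (Nat.cast_pos.mpr hm).trans_le hmn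
  have ha := hA.1.smul_one_le_of_le_eigenvalues fun i => hmin.2 ⟨i, rfl⟩
  have hb := hA.1.le_smul_one_of_eigenvalues_le fun i => hmax.2 ⟨i, rfl⟩
  have hcontr (k : ℕ) : (xstar - x (k + 1)) ⬝ᵥ A *ᵥ (xstar - x (k + 1))
      ≤ (1 - m * lmin / (n * lmax)) * ((xstar - x k) ⬝ᵥ A *ᵥ (xstar - x k)) := by
    have hres : r k = A *ᵥ (xstar - x k) := by rw [hr, ← hxstar, mulVec_sub]
    rw [hstep, ← sub_sub, hres]
    simpa only [Fintype.card_fin] using hA.dotProduct_mulVec_greedy_step_le ha hb hlmax (hf k)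
      (xstar - x k) (hres ▸ hsel k) (E k) (by rw [hE k, of_ite_eq_one_submatrix])
  refine ⟨hcontr, ?_⟩
  have hc0 : 0 ≤ 1 - m * lmin / (n * lmax) := by
    rw [sub_nonneg, div_le_one (by positivity)]
    exact mul_le_mul hmn hle hlmin.le hn.le
  have hc1 : 1 - m * lmin / (n * lmax) < 1 := by
    rw [sub_lt_self_iff]
    positivity
  rw [← tendsto_sub_nhds_zero_iff]
  simpa using (tendsto_zero_of_dotProduct_mulVec_succ_le (e := (xstar - x ·)) ha hlmin hc0 hc1
    hcontr).neg

theorem stmt_17 {n m : ℕ} (hn : 0 < n) (hm : 0 < m)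
    (A : Matrix (Fin n) (Fin n) ℝ) (hA : A.PosDef)
    (lmin lmax : ℝ)
    (hmin : IsLeast (Set.range hA.1.eigenvalues) lmin)
    (hmax : IsGreatest (Set.range hA.1.eigenvalues) lmax)
    (b xstar : Fin n → ℝ) (hxstar : A.mulVec xstar = b)
    (x : ℕ → Fin n → ℝ) (r : ℕ → Fin n → ℝ)
    (hr : ∀ k, r k = b - A.mulVec (x k))
    (f : ℕ → Fin m → Fin n) (hf : ∀ k, Function.Injective (f k))
    (hsel : ∀ k, ∀ i : Fin n, i ∉ Set.range (f k) → ∀ j : Fin m,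
      |r k i| ≤ |r k (f k j)|)
    (E : ℕ → Matrix (Fin n) (Fin m) ℝ)
    (hE : ∀ k, E k = Matrix.of fun i j => if i = f k j then 1 else 0)
    (hstep : ∀ k, x (k+1) = x k +
      (E k).mulVec (((E k)ᵀ * A * E k)⁻¹.mulVec ((E k)ᵀ.mulVec (r k)))) :
    (∀ k, (xstar - x (k+1)) ⬝ᵥ A.mulVec (xstar - x (k+1))
        ≤ (1 - m * lmin / (n * lmax)) *
          ((xstar - x k) ⬝ᵥ A.mulVec (xstar - x k))) ∧
      Filter.Tendsto x Filter.atTop (nhds xstar) :=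
  stmt_17_general hm A hA lmin lmax hmin hmax b xstar hxstar x r hr f hf hsel E hE hstep
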